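/- arXiv:2512.22871 — 6 statements merged into one kernel-verified Lean document; each statement's English description precedes it below -/
import Mathlib

section
/- Let e₁, e₂, e₃ be real numbers that are not all equal, let f = (e₃−e₂, e₁−e₃, e₂−e₁), and let p₁, p₂, p₃ be strictly positive real numbers satisfying p₁+p₂+p₃ = 1 and e₁p₁+e₂p₂+e₃p₃ = 1. Define the log-probability vector q = (−ln p₁, −ln p₂, −ln p₃). If f·q = 0, then there exist real numbers α and β such that pₖ = exp(−α − β eₖ) for k = 1,2,3; i.e., the critical point of the constrained entropy is the Boltzmann distribution. -/
/-- Three-level system: if the positive probabilities `p₁, p₂, p₃` satisfy the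
normalization and energy constraints and the log-probability vector
`q = (−ln p₁, −ln p₂, −ln p₃)` is orthogonal to `f = (e₃−e₂, e₁−e₃, e₂−e₁)`
(the critical point condition for the entropy), then `p` is a Boltzmann
distribution: `pₖ = exp(−α − β eₖ)` for some `α, β`. -/
theorem three_level_critical_is_boltzmann (e₁ e₂ e₃ : ℝ) (h : ¬(e₁ = e₂ ∧ e₂ = e₃))
    (p₁ p₂ p₃ : ℝ) (hp₁ : 0 < p₁) (hp₂ : 0 < p₂) (hp₃ : 0 < p₃)
    (hnorm : p₁ + p₂ + p₃ = 1)
    (hen : e₁ * p₁ + e₂ * p₂ + e₃ * p₃ = 1)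
    (hcrit : (e₃ - e₂) * (-Real.log p₁) + (e₁ - e₃) * (-Real.log p₂) +
      (e₂ - e₁) * (-Real.log p₃) = 0) :
    ∃ α β : ℝ, p₁ = Real.exp (-α - β * e₁) ∧ p₂ = Real.exp (-α - β * e₂) ∧
      p₃ = Real.exp (-α - β * e₃) := by
  set l₁ := Real.log p₁
  set l₂ := Real.log p₂
  set l₃ := Real.log p₃
  by_cases h12 : e₁ = e₂
  · have h23 : e₂ ≠ e₃ := fun h23 => h ⟨h12, h23⟩
    have hne : e₂ - e₃ ≠ 0 := sub_ne_zero.mpr h23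
    refine ⟨-l₂ - ((l₃ - l₂) / (e₂ - e₃)) * e₂, (l₃ - l₂) / (e₂ - e₃), ?_, ?_, ?_⟩
    · rw [← Real.exp_log hp₁]
      congr 1
      subst h12
      have hl : l₁ = l₂ := by
        have h' : (e₁ - e₃) * (l₁ - l₂) = 0 := by ring_nf; ring_nf at hcrit; linarith
        have := (mul_eq_zero.mp h').resolve_left hne
        linarith
      rw [show Real.log p₁ = l₂ from hl]
      ring
    · rw [← Real.exp_log hp₂]
      congr 1
      ring
    · rw [← Real.exp_log hp₃]
      congr 1
      field_simp
      ring
  · have hne : e₁ - e₂ ≠ 0 := sub_ne_zero.mpr h12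
    refine ⟨-l₁ - ((l₂ - l₁) / (e₁ - e₂)) * e₁, (l₂ - l₁) / (e₁ - e₂), ?_, ?_, ?_⟩
    · rw [← Real.exp_log hp₁]
      congr 1
      ring
    · rw [← Real.exp_log hp₂]
      congr 1
      field_simp
      ring
    · rw [← Real.exp_log hp₃]
      congr 1
      field_simp at hcrit ⊢
      nlinarith [hcrit]
end

section
/- Let N ≥ 3 and let e : Fin N → ℝ be pairwise distinct reduced energy levels. Let I = (1,…,1) ∈ ℝ^N, and for 1 ≤ k ≤ N−2 let fₖ ∈ ℝ^N be the vector whose only nonzero entries are at positions k, k+1, k+2 and equal e_{k+2} − e_{k+1}, e_k − e_{k+2}, e_{k+1} − e_k respectively. Then ℝ^N decomposes as the internal direct sum ℝ^N = span{I, e} ⊕ span{f₁, …, f_{N−2}}, and the two summands are orthogonal with respect to the standard Euclidean inner product; in particular {I, e, f₁, …, f_{N−2}} is a basis of ℝ^N. -/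
/-- The complementary vector `fⱼ ∈ ℝᴺ` of an `N`-level system: its only nonzero
entries are at positions `j, j+1, j+2` (0-indexed) and equal
`e_{j+2} − e_{j+1}`, `e_j − e_{j+2}`, `e_{j+1} − e_j`, respectively. -/
def compVec (N : ℕ) (e : Fin N → ℝ) (j : ℕ) (hj : j + 2 < N) : Fin N → ℝ := fun m =>
  if (m : ℕ) = j then e ⟨j + 2, hj⟩ - e ⟨j + 1, by omega⟩
  else if (m : ℕ) = j + 1 then e ⟨j, by omega⟩ - e ⟨j + 2, hj⟩
  else if (m : ℕ) = j + 2 then e ⟨j + 1, by omega⟩ - e ⟨j, by omega⟩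
  else 0

/-- The Euclidean pairing as a bilinear map. -/
noncomputable def eucB (N : ℕ) : (Fin N → ℝ) →ₗ[ℝ] (Fin N → ℝ) →ₗ[ℝ] ℝ :=
  LinearMap.mk₂ ℝ (fun u v => ∑ m, u m * v m)
    (fun u u' v => by simp [add_mul, Finset.sum_add_distrib])
    (fun c u v => by simp [Finset.mul_sum, mul_assoc])
    (fun u v v' => by simp [mul_add, Finset.sum_add_distrib])
    (fun c u v => by
      simp [Finset.mul_sum]
      exact Finset.sum_congr rfl fun m _ => by ring)

theorem sum_mul_compVec (N : ℕ) (e : Fin N → ℝ) (j : ℕ) (hj : j + 2 < N)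
    (u : Fin N → ℝ) :
    ∑ m, u m * compVec N e j hj m =
      u ⟨j, by omega⟩ * (e ⟨j + 2, hj⟩ - e ⟨j + 1, by omega⟩) +
      u ⟨j + 1, by omega⟩ * (e ⟨j, by omega⟩ - e ⟨j + 2, hj⟩) +
      u ⟨j + 2, hj⟩ * (e ⟨j + 1, by omega⟩ - e ⟨j, by omega⟩) := by
  have h01 : (⟨j, by omega⟩ : Fin N) ≠ ⟨j + 1, by omega⟩ := by
    simp [Fin.ext_iff]
  have h02 : (⟨j, by omega⟩ : Fin N) ≠ ⟨j + 2, hj⟩ := by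
    simp [Fin.ext_iff]
  have h12 : (⟨j + 1, by omega⟩ : Fin N) ≠ ⟨j + 2, hj⟩ := by
    simp [Fin.ext_iff]
  rw [← Finset.sum_subset
    (Finset.subset_univ ({⟨j, by omega⟩, ⟨j + 1, by omega⟩, ⟨j + 2, hj⟩} : Finset (Fin N)))]
  · rw [Finset.sum_insert (by simp [h01, h02]), Finset.sum_insert (by simp [h12]),
      Finset.sum_singleton]
    simp [compVec]
    ring
  · intro m _ hm
    simp only [Finset.mem_insert, Finset.mem_singleton] at hm
    push_neg at hm
    obtain ⟨h1, h2, h3⟩ := hm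
    have e1 : (m : ℕ) ≠ j := fun h => h1 (Fin.ext h)
    have e2 : (m : ℕ) ≠ j + 1 := fun h => h2 (Fin.ext h)
    have e3 : (m : ℕ) ≠ j + 2 := fun h => h3 (Fin.ext h)
    simp [compVec, e1, e2, e3]

theorem compVec_apply_of_lt (N : ℕ) (e : Fin N → ℝ) (j : ℕ) (hj : j + 2 < N)
    (m : Fin N) (hm : (m : ℕ) < j) : compVec N e j hj m = 0 := by
  have h1 : (m : ℕ) ≠ j := by omega
  have h2 : (m : ℕ) ≠ j + 1 := by omega
  have h3 : (m : ℕ) ≠ j + 2 := by omega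
  simp [compVec, h1, h2, h3]

/-- For pairwise distinct reduced energy levels, `ℝᴺ` decomposes as the internal
direct sum of `span{I, e}` and `span{f₁, …, f_{N−2}}`, the two summands are
orthogonal for the standard Euclidean inner product, and the combined family
`{I, e, f₁, …, f_{N−2}}` is a basis of `ℝᴺ` (linearly independent and spanning). -/
theorem span_ones_energy_isCompl_span_compVec (N : ℕ) (hN : 3 ≤ N) (e : Fin N → ℝ)
    (hdist : Function.Injective e) :
    let I : Fin N → ℝ := fun _ => 1
    let f : Fin (N - 2) → Fin N → ℝ :=
      fun j => compVec N e j (by have := j.2; omega)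
    let U : Submodule ℝ (Fin N → ℝ) := Submodule.span ℝ {I, e}
    let V : Submodule ℝ (Fin N → ℝ) := Submodule.span ℝ (Set.range f)
    IsCompl U V ∧
    (∀ u ∈ U, ∀ v ∈ V, ∑ m, u m * v m = 0) ∧
    LinearIndependent ℝ (Sum.elim ![I, e] f) ∧
    Submodule.span ℝ (Set.range (Sum.elim ![I, e] f)) = ⊤ := by
  intro I f U V
  set B := eucB N with hB
  have hBapp : ∀ u v : Fin N → ℝ, B u v = ∑ m, u m * v m := fun u v => rfl
  -- orthogonality on generators
  have hIf : ∀ j : Fin (N - 2), B I (f j) = 0 := by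
    intro j
    rw [hBapp]
    show (∑ m, I m * compVec N e j (by have := j.2; omega) m) = 0
    rw [sum_mul_compVec]
    simp only [I]
    ring
  have hef : ∀ j : Fin (N - 2), B e (f j) = 0 := by
    intro j
    rw [hBapp]
    show (∑ m, e m * compVec N e j (by have := j.2; omega) m) = 0
    rw [sum_mul_compVec]
    ring
  -- orthogonality on spans
  have horth : ∀ u ∈ U, ∀ v ∈ V, ∑ m, u m * v m = 0 := by
    intro u hu v hv
    have hv' : ∀ w ∈ ({I, e} : Set (Fin N → ℝ)), B w v = 0 := by
      intro w hw
      have : V ≤ LinearMap.ker (B w) := by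
        rw [Submodule.span_le]
        rintro _ ⟨j, rfl⟩
        rcases hw with rfl | rfl
        · exact hIf j
        · simp at *
          exact hef j
      simpa using this hv
    have : U ≤ LinearMap.ker ((B.flip) v) := by
      rw [Submodule.span_le]
      intro w hw
      simpa using hv' w hw
    simpa [hBapp] using this hu
  -- linear independence of f
  have hLIf : ∀ c : Fin (N - 2) → ℝ, (∑ j, c j • f j = 0) → ∀ j, c j = 0 := by
    intro c hc
    have key : ∀ n : ℕ, ∀ j : Fin (N - 2), (j : ℕ) = n → c j = 0 := by
      intro n
      induction n using Nat.strong_induction_on with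
      | _ n ih =>
        intro j hj
        have hjN : (j : ℕ) + 2 < N := by have := j.2; omega
        have hev : ∑ j' : Fin (N - 2), c j' * f j' ⟨(j : ℕ), by omega⟩ = 0 := by
          have := congrFun hc ⟨(j : ℕ), by omega⟩
          simpa [Finset.sum_apply] using this
        have hsingle : ∑ j' : Fin (N - 2), c j' * f j' ⟨(j : ℕ), by omega⟩ =
            c j * f j ⟨(j : ℕ), by omega⟩ := by
          apply Finset.sum_eq_single_of_mem j (Finset.mem_univ j)
          intro j' _ hj'
          rcases lt_or_gt_of_ne (fun h : (j' : ℕ) = (j : ℕ) => hj' (Fin.ext h)) with h | h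
          · -- j' < j : coefficient vanishes by induction
            rw [ih (j' : ℕ) (by omega) j' rfl, zero_mul]
          · -- j' > j : vector vanishes at coordinate j
            have hz : f j' ⟨(j : ℕ), by omega⟩ = 0 :=
              compVec_apply_of_lt N e (j' : ℕ) (by have := j'.2; omega) _ (by simpa using h)
            rw [hz, mul_zero]
        have hfj : f j ⟨(j : ℕ), by omega⟩ =
            e ⟨(j : ℕ) + 2, hjN⟩ - e ⟨(j : ℕ) + 1, by omega⟩ := by
          simp [f, compVec]
        rw [hsingle, hfj] at hev
        have hne : e ⟨(j : ℕ) + 2, hjN⟩ - e ⟨(j : ℕ) + 1, by omega⟩ ≠ 0 := by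
          intro h
          have := hdist (sub_eq_zero.mp h)
          simp [Fin.ext_iff] at this
        exact (mul_eq_zero.mp hev).resolve_right hne
    intro j; exact key (j : ℕ) j rfl
  -- linear independence of the combined family
  have hLI : LinearIndependent ℝ (Sum.elim ![I, e] f) := by
    rw [Fintype.linearIndependent_iff]
    intro d hd
    rw [Fintype.sum_sum_type, Fin.sum_univ_two] at hd
    simp only [Sum.elim_inl, Sum.elim_inr, Matrix.cons_val_zero, Matrix.cons_val_one,
      Matrix.head_cons] at hd
    set u : Fin N → ℝ := d (Sum.inl 0) • I + d (Sum.inl 1) • e with hu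
    set v : Fin N → ℝ := ∑ j, d (Sum.inr j) • f j with hv
    have huv : u + v = 0 := by rw [hu, hv]; exact hd
    have hUmem : u ∈ U := by
      apply Submodule.add_mem
      · exact Submodule.smul_mem _ _ (Submodule.subset_span (by simp))
      · exact Submodule.smul_mem _ _ (Submodule.subset_span (by simp))
    have hVmem : v ∈ V := by
      apply Submodule.sum_mem
      intro j _
      exact Submodule.smul_mem _ _ (Submodule.subset_span ⟨j, rfl⟩)
    have hBuv : ∑ m, u m * v m = 0 := horth u hUmem v hVmem
    have hvu : v = -u := by linear_combination (norm := abel) huv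
    have huu : ∑ m, u m * u m = 0 := by
      have : ∑ m, u m * (-u) m = 0 := by rw [← hvu]; exact hBuv
      simpa [Finset.sum_neg_distrib] using neg_eq_zero.mp (by
        simpa [neg_mul, mul_neg, Finset.sum_neg_distrib] using this)
    have hu0 : ∀ m, u m = 0 := by
      intro m
      have hnn : ∀ i ∈ Finset.univ, (0 : ℝ) ≤ u i * u i := fun i _ => mul_self_nonneg _
      have := (Finset.sum_eq_zero_iff_of_nonneg hnn).mp huu m (Finset.mem_univ m)
      exact mul_self_eq_zero.mp this
    -- deduce both scalar coefficients vanish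
    have h0 : d (Sum.inl 0) + d (Sum.inl 1) * e ⟨0, by omega⟩ = 0 := by
      have := hu0 ⟨0, by omega⟩; simpa [hu, I] using this
    have h1 : d (Sum.inl 0) + d (Sum.inl 1) * e ⟨1, by omega⟩ = 0 := by
      have := hu0 ⟨1, by omega⟩; simpa [hu, I] using this
    have hene : e ⟨0, by omega⟩ ≠ e ⟨1, by omega⟩ := by
      intro h; have := hdist h; simp [Fin.ext_iff] at this
    have hb : d (Sum.inl 1) = 0 := by
      by_contra hb
      exact hene (by
        have : d (Sum.inl 1) * e ⟨0, by omega⟩ = d (Sum.inl 1) * e ⟨1, by omega⟩ := by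
          linarith
        exact mul_left_cancel₀ hb this)
    have ha : d (Sum.inl 0) = 0 := by
      have := h0; rw [hb] at this; linarith
    have hvz : v = 0 := by
      have : u = 0 := funext hu0
      rw [this, zero_add] at huv; exact huv
    have hcf : ∀ j, d (Sum.inr j) = 0 := hLIf _ (by rw [← hv]; exact hvz)
    rintro (i | j)
    · fin_cases i
      · exact ha
      · exact hb
    · exact hcf j
  -- spanning
  have hcard : Fintype.card (Fin 2 ⊕ Fin (N - 2)) = Module.finrank ℝ (Fin N → ℝ) := by
    simp [Module.finrank_fin_fun]
    omega
  have hspan : Submodule.span ℝ (Set.range (Sum.elim ![I, e] f)) = ⊤ :=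
    hLI.span_eq_top_of_card_eq_finrank hcard
  -- range decomposition
  have hrange : Set.range (Sum.elim ![I, e] f) = ({I, e} : Set (Fin N → ℝ)) ∪ Set.range f := by
    rw [Set.Sum.elim_range]
    congr 1
    ext x
    constructor
    · rintro ⟨i, rfl⟩
      fin_cases i <;> simp
    · rintro (rfl | rfl)
      · exact ⟨0, rfl⟩
      · exact ⟨1, rfl⟩
  have hsup : U ⊔ V = ⊤ := by
    rw [← Submodule.span_union, ← hrange, hspan]
  have hdisj : Disjoint U V := by
    rw [Submodule.disjoint_def]
    intro x hxU hxV
    have : ∑ m, x m * x m = 0 := horth x hxU x hxV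
    funext m
    have hnn : ∀ i ∈ Finset.univ, (0 : ℝ) ≤ x i * x i := fun i _ => mul_self_nonneg _
    exact mul_self_eq_zero.mp ((Finset.sum_eq_zero_iff_of_nonneg hnn).mp this m (Finset.mem_univ m))
  refine ⟨⟨hdisj, codisjoint_iff.mpr hsup⟩, horth, hLI, hspan⟩
end

section
/- Let N ≥ 3 and let e : Fin N → ℝ be pairwise distinct reduced energy levels, with fₖ (1 ≤ k ≤ N−2) the vector in ℝ^N whose only nonzero entries are at positions k, k+1, k+2 and equal e_{k+2} − e_{k+1}, e_k − e_{k+2}, e_{k+1} − e_k respectively. Let p : Fin N → ℝ satisfy pₖ > 0 for all k, Σₖ pₖ = 1, and Σₖ eₖ pₖ = 1, and define the log-probability vector q by qₖ = −ln pₖ. If fⱼ · q = 0 for every j = 1, …, N−2, then there exist real numbers α and β such that pₖ = exp(−α − β eₖ) for all k; i.e., the critical point of the maximal entropy problem is uniquely the Boltzmann distribution. -/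
/-- `N`-level system: if the positive probabilities `p` satisfy the normalization
and energy constraints and the log-probability vector `q = (−ln p₁, …, −ln p_N)`
is orthogonal to every complementary vector `fⱼ` (the critical point condition of
the maximal entropy problem), then `p` is the Boltzmann distribution
`pₖ = exp(−α − β eₖ)` for some `α, β`. -/
theorem n_level_critical_is_boltzmann (N : ℕ) (hN : 3 ≤ N) (e : Fin N → ℝ)
    (hdist : Function.Injective e)
    (p : Fin N → ℝ) (hp : ∀ k, 0 < p k)
    (hnorm : ∑ k, p k = 1) (hen : ∑ k, e k * p k = 1)
    (hcrit : ∀ (j : ℕ) (hj : j + 2 < N),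
      ∑ m, compVec N e j hj m * (-Real.log (p m)) = 0) :
    ∃ α β : ℝ, ∀ k, p k = Real.exp (-α - β * e k) := by
  set q : Fin N → ℝ := fun k => -Real.log (p k) with hq
  have h0N : (0:ℕ) < N := by omega
  have h1N : (1:ℕ) < N := by omega
  -- evaluate the three-term relation
  have key : ∀ (j : ℕ) (hj : j + 2 < N),
      (e ⟨j+2, hj⟩ - e ⟨j+1, by omega⟩) * q ⟨j, by omega⟩
      + (e ⟨j, by omega⟩ - e ⟨j+2, hj⟩) * q ⟨j+1, by omega⟩
      + (e ⟨j+1, by omega⟩ - e ⟨j, by omega⟩) * q ⟨j+2, hj⟩ = 0 := by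
    intro j hj
    have h := hcrit j hj
    set a : Fin N := ⟨j, by omega⟩
    set b : Fin N := ⟨j+1, by omega⟩
    set c : Fin N := ⟨j+2, hj⟩
    have hab : a ≠ b := by simp [a, b, Fin.ext_iff]
    have hac : a ≠ c := by simp [a, c, Fin.ext_iff]
    have hbc : b ≠ c := by simp [b, c, Fin.ext_iff]
    have hsum : ∑ m, compVec N e j hj m * q m =
        ∑ m ∈ ({a, b, c} : Finset (Fin N)), compVec N e j hj m * q m := by
      refine (Finset.sum_subset (Finset.subset_univ _) ?_).symm
      intro m _ hm
      simp only [Finset.mem_insert, Finset.mem_singleton] at hm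
      push_neg at hm
      have h1 : (m:ℕ) ≠ j := fun h => hm.1 (Fin.ext h)
      have h2 : (m:ℕ) ≠ j+1 := fun h => hm.2.1 (Fin.ext h)
      have h3 : (m:ℕ) ≠ j+2 := fun h => hm.2.2 (Fin.ext h)
      simp [compVec, h1, h2, h3]
    rw [hsum] at h
    rw [Finset.sum_insert (by simp [hab, hac]), Finset.sum_insert (by simp [hbc]),
      Finset.sum_singleton] at h
    have ea : compVec N e j hj a = e ⟨j+2, hj⟩ - e ⟨j+1, by omega⟩ := by
      simp [compVec, a]
    have eb : compVec N e j hj b = e ⟨j, by omega⟩ - e ⟨j+2, hj⟩ := by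
      simp [compVec, b]
    have ec : compVec N e j hj c = e ⟨j+1, by omega⟩ - e ⟨j, by omega⟩ := by
      simp [compVec, c]
    rw [ea, eb, ec] at h
    linarith [h]
  set β : ℝ := (q ⟨1, h1N⟩ - q ⟨0, h0N⟩) / (e ⟨1, h1N⟩ - e ⟨0, h0N⟩) with hβ
  set α : ℝ := q ⟨0, h0N⟩ - β * e ⟨0, h0N⟩ with hα
  have he01 : e ⟨1, h1N⟩ - e ⟨0, h0N⟩ ≠ 0 := by
    intro h
    have := hdist (a₁ := ⟨1, h1N⟩) (a₂ := ⟨0, h0N⟩) (by linarith)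
    simp [Fin.ext_iff] at this
  have main : ∀ n (h : n < N), q ⟨n, h⟩ = α + β * e ⟨n, h⟩ := by
    intro n
    induction n using Nat.strong_induction_on with
    | _ n ih =>
      intro h
      match n with
      | 0 => rw [hα]; ring
      | 1 =>
        rw [hα, hβ]
        field_simp
        ring
      | (n+2) =>
        have hn1 : n + 1 < N := by omega
        have hn : n < N := by omega
        have h1 := ih n (by omega) hn
        have h2 := ih (n+1) (by omega) hn1
        have hk := key n h
        rw [h1, h2] at hk
        have hne : e ⟨n+1, hn1⟩ - e ⟨n, hn⟩ ≠ 0 := by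
          intro h'
          have := hdist (a₁ := ⟨n+1, hn1⟩) (a₂ := ⟨n, hn⟩) (by linarith)
          simp [Fin.ext_iff] at this
        have : (e ⟨n+1, hn1⟩ - e ⟨n, hn⟩) * q ⟨n+2, h⟩
            = (e ⟨n+1, hn1⟩ - e ⟨n, hn⟩) * (α + β * e ⟨n+2, h⟩) := by linear_combination hk
        exact mul_left_cancel₀ hne this
  refine ⟨α, β, fun k => ?_⟩
  have hk := main k.1 k.2
  have : q k = α + β * e k := by simpa using hk
  have hlog : Real.log (p k) = -α - β * e k := by
    have := this
    simp only [hq] at this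
    linarith
  rw [← hlog, Real.exp_log (hp k)]
end

section
/- (Theorem 2) Let N ≥ 1 and let e : Fin N → ℚ be rational reduced energy levels. Let p : Fin N → ℝ satisfy pₖ > 0 for all k, Σₖ pₖ = 1, Σₖ eₖ pₖ = 1, and suppose p is a Boltzmann distribution: there exist α, β ∈ ℝ with pₖ = exp(−α − β eₖ) for all k. Then every pₖ is an algebraic number (algebraic over ℚ). -/
open Real Polynomial Finset

/-- Theorem 2 of the paper: if the reduced energy levels of a finite system are all
rational, then the Boltzmann probabilities satisfying the normalization and energy
constraints are all algebraic numbers. -/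
theorem boltzmann_rational_levels_algebraic (N : ℕ) (hN : 1 ≤ N)
    (e : Fin N → ℚ) (p : Fin N → ℝ)
    (hp : ∀ k, 0 < p k)
    (hnorm : ∑ k, p k = 1)
    (hen : ∑ k, (e k : ℝ) * p k = 1)
    (hB : ∃ α β : ℝ, ∀ k, p k = Real.exp (-α - β * (e k : ℝ))) :
    ∀ k, IsAlgebraic ℚ (p k) := by
  obtain ⟨α, β, hβ⟩ := hB
  have hNe : (Finset.univ : Finset (Fin N)).Nonempty := by
    haveI : NeZero N := ⟨by omega⟩
    exact Finset.univ_nonempty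
  by_cases hall : ∀ k, e k = 1
  · -- all levels equal 1 : p is constant 1/N
    intro k
    have hconst : ∀ j, p j = p k := by
      intro j; rw [hβ j, hβ k, hall j, hall k]
    have hsum : (N : ℝ) * p k = 1 := by
      rw [← hnorm, Finset.sum_congr rfl fun j _ => hconst j]
      simp [Finset.card_univ, mul_comm]
    have hNpos : (0:ℝ) < N := by positivity
    have hpk : p k = ((N : ℚ) : ℝ)⁻¹ := by
      push_cast
      field_simp at hsum ⊢
      linarith
    rw [hpk]
    have := isAlgebraic_algebraMap (A := ℝ) ((N : ℚ))⁻¹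
    simpa using this
  push_neg at hall
  obtain ⟨k0, hk0⟩ := hall
  -- common denominator
  set D : ℕ := ∏ k, (e k).den with hDdef
  have hDpos : 0 < D := Finset.prod_pos fun k _ => (e k).pos
  have hDne : (D : ℚ) ≠ 0 := by positivity
  -- integer numerators m k with (m k : ℚ) = e k * D
  have hm : ∀ k, ∃ m : ℤ, (m : ℚ) = e k * D := by
    intro k
    obtain ⟨c, hc⟩ : ((e k).den : ℤ) ∣ (D : ℤ) := by
      exact_mod_cast Finset.dvd_prod_of_mem (fun k => (e k).den) (Finset.mem_univ k)
    refine ⟨(e k).num * c, ?_⟩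
    have hden0 : ((e k).den : ℚ) ≠ 0 := Nat.cast_ne_zero.mpr (e k).den_nz
    have h1 : ((e k).num : ℚ) = e k * (e k).den :=
      (div_eq_iff hden0).mp (Rat.num_div_den (e k))
    have hc' : (D : ℚ) = ((e k).den : ℚ) * (c : ℚ) := by exact_mod_cast hc
    push_cast [h1]
    rw [hc']; ring
  choose m hmQ using hm
  -- the base s
  set s : ℝ := Real.exp (-β / D) with hsdef
  have hspos : 0 < s := Real.exp_pos _
  have hzpow : ∀ (x : ℝ) (n : ℤ), Real.exp x ^ n = Real.exp (n * x) := by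
    intro x n
    rw [← Real.rpow_intCast, Real.rpow_def_of_pos (Real.exp_pos x), Real.log_exp, mul_comm]
  have hmR : ∀ k, ((m k : ℝ)) = (e k : ℝ) * D := by
    intro k; exact_mod_cast congrArg (fun q : ℚ => (q : ℝ)) (hmQ k)
  have hps : ∀ k, p k = Real.exp (-α) * s ^ (m k) := by
    intro k
    rw [hβ k, hsdef, hzpow]
    rw [← Real.exp_add]
    congr 1
    rw [hmR k]
    have : (D : ℝ) ≠ 0 := by positivity
    field_simp
    ring
  -- shift exponents to naturals
  set M : ℤ := Finset.univ.inf' hNe m with hMdef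
  have hMle : ∀ k, M ≤ m k := fun k => Finset.inf'_le m (Finset.mem_univ k)
  set n : Fin N → ℕ := fun k => (m k - M).toNat with hndef
  have hnm : ∀ k, (n k : ℤ) = m k - M := fun k =>
    Int.toNat_of_nonneg (sub_nonneg.mpr (hMle k))
  have hsnm : ∀ k, s ^ (m k) = s ^ (n k) * s ^ M := by
    intro k
    rw [← zpow_natCast s (n k), ← zpow_add₀ hspos.ne', hnm k]
    ring_nf
  set B : ℝ := Real.exp (-α) * s ^ M with hBdef
  have hBpos : 0 < B := by positivity
  have hpB : ∀ k, p k = B * s ^ n k := by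
    intro k; rw [hps k, hsnm k, hBdef]; ring
  set T : ℝ := ∑ j, s ^ n j with hTdef
  have hTpos : 0 < T := Finset.sum_pos (fun j _ => by positivity) hNe
  have hBT : B * T = 1 := by
    rw [hTdef, Finset.mul_sum, ← hnorm]
    exact Finset.sum_congr rfl fun j _ => (hpB j).symm
  have hBinv : B = T⁻¹ := by field_simp at hBT ⊢; linarith
  -- the polynomial relation
  have hroot : ∑ k, ((e k : ℝ) - 1) * s ^ n k = 0 := by
    have h1 : ∑ k, ((e k : ℝ) - 1) * p k = 0 := by
      have := hen
      rw [← hnorm] at this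
      calc ∑ k, ((e k : ℝ) - 1) * p k
          = (∑ k, (e k : ℝ) * p k) - ∑ k, p k := by
            rw [← Finset.sum_sub_distrib]; exact Finset.sum_congr rfl fun k _ => by ring
        _ = 0 := by rw [hen, hnorm]; ring
    have h2 : B * ∑ k, ((e k : ℝ) - 1) * s ^ n k = 0 := by
      rw [Finset.mul_sum, ← h1]
      exact Finset.sum_congr rfl fun k _ => by rw [hpB k]; ring
    exact (mul_eq_zero.mp h2).resolve_left hBpos.ne'
  set P : Polynomial ℚ := ∑ k, Polynomial.C (e k - 1) * Polynomial.X ^ n k with hPdef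
  have hPeval : Polynomial.aeval s P = 0 := by
    rw [hPdef, map_sum, ← hroot]
    refine Finset.sum_congr rfl fun k _ => ?_
    simp [Rat.cast_sub]
  have hinj : ∀ k, n k = n k0 → e k = e k0 := by
    intro k hk
    have hmk : m k = m k0 := by
      have := hnm k; rw [hk, hnm k0] at this; omega
    have : (e k : ℚ) * D = e k0 * D := by rw [← hmQ k, ← hmQ k0, hmk]
    exact mul_right_cancel₀ hDne this
  have hPne : P ≠ 0 := by
    intro h0
    have hc : P.coeff (n k0) = 0 := by rw [h0]; simp
    rw [hPdef, Polynomial.finset_sum_coeff] at hc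
    have hc2 : ∑ k, (if n k0 = n k then e k - 1 else 0) = 0 := by
      rw [← hc]
      refine Finset.sum_congr rfl fun k _ => ?_
      rw [Polynomial.coeff_C_mul, Polynomial.coeff_X_pow]
      split <;> simp_all
    rw [← Finset.sum_filter] at hc2
    have heq : ∀ k ∈ Finset.univ.filter (fun k => n k0 = n k), e k - 1 = e k0 - 1 := by
      intro k hk
      rw [Finset.mem_filter] at hk
      rw [hinj k hk.2.symm]
    rw [Finset.sum_congr rfl heq, Finset.sum_const] at hc2
    have hmem : k0 ∈ Finset.univ.filter (fun k => n k0 = n k) := by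
      simp [Finset.mem_filter]
    have hcard : 0 < (Finset.univ.filter (fun k => n k0 = n k)).card :=
      Finset.card_pos.mpr ⟨k0, hmem⟩
    have : e k0 - 1 ≠ 0 := sub_ne_zero.mpr hk0
    have : ((Finset.univ.filter (fun k => n k0 = n k)).card : ℚ) ≠ 0 := by positivity
    simp_all [smul_eq_mul, mul_eq_zero]
  have hsalg : IsAlgebraic ℚ s := ⟨P, hPne, hPeval⟩
  have hsint : IsIntegral ℚ s := isAlgebraic_iff_isIntegral.mp hsalg
  have hTint : IsIntegral ℚ T :=
    IsIntegral.sum _ fun j _ => hsint.pow (n j)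
  have hTinv : IsIntegral ℚ T⁻¹ :=
    isAlgebraic_iff_isIntegral.mp ((isAlgebraic_iff_isIntegral.mpr hTint).inv)
  intro k
  rw [hpB k, hBinv]
  exact isAlgebraic_iff_isIntegral.mpr (hTinv.mul (hsint.pow (n k)))
end

section
/- Let N ≥ 3, let e : Fin N → ℝ have pairwise distinct values, let fⱼ (1 ≤ j ≤ N−2) be the vector in ℝ^N whose only nonzero entries are at positions j, j+1, j+2 and equal e_{j+2} − e_{j+1}, e_j − e_{j+2}, e_{j+1} − e_j respectively, and let p : Fin N → ℝ satisfy pₘ > 0 for all m. Define the (N−2)×(N−2) matrix g by g_{jk} = Σₘ₌₁^N f_{jm} f_{km} / pₘ. Then g is positive definite; equivalently, the Hessian matrix of the constrained entropy, whose (j,k) entry is −g_{jk}, is negative definite, so the critical point of the entropy is a maximum. -/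
open Matrix

theorem Matrix.vecMul_injective_of_isLowerTriangular_submatrix {ι κ K : Type*} [Fintype ι]
    [LinearOrder ι] [Field K] {F : Matrix ι κ K} {c : ι → κ}
    (hlow : (F.submatrix id c).IsLowerTriangular) (hdiag : ∀ i, F i (c i) ≠ 0) :
    Function.Injective F.vecMul := by
  have hunit : IsUnit (F.submatrix id c) := by
    rw [isUnit_iff_isUnit_det, det_of_isLowerTriangular _ hlow]
    exact (Finset.prod_ne_zero_iff.mpr fun i _ => hdiag i).isUnit
  intro v w hvw
  exact vecMul_injective_iff_isUnit.mpr hunit (congrArg (· ∘ c) hvw :)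

theorem Matrix.posDef_mul_diagonal_inv_mul_transpose {ι κ : Type*} [Fintype ι] [Fintype κ]
    [DecidableEq κ] {F : Matrix ι κ ℝ} (hF : Function.Injective F.vecMul) {p : κ → ℝ}
    (hp : ∀ m, 0 < p m) : (F * diagonal p⁻¹ * Fᵀ).PosDef := by
  rw [← conjTranspose_eq_transpose_of_trivial]
  exact (posDef_diagonal_iff.mpr fun m => inv_pos.mpr (hp m)).mul_mul_conjTranspose_same hF

theorem Matrix.PosDef.sum_sum_mul_neg_mul_lt_zero {ι : Type*} [Fintype ι]
    {M : Matrix ι ι ℝ} (hM : M.PosDef) {v : ι → ℝ} (hv : v ≠ 0) :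
    ∑ j, ∑ k, v j * (-M j k) * v k < 0 := by
  calc ∑ j, ∑ k, v j * (-M j k) * v k = -(star v ⬝ᵥ (M *ᵥ v)) := by
        simp [dotProduct, mulVec, Finset.mul_sum, mul_assoc]
    _ < 0 := neg_neg_of_pos (hM.dotProduct_mulVec_pos hv)

section compVec

variable {N : ℕ} (e : Fin N → ℝ)

theorem compVec_apply_add_two_of_lt {j k : ℕ} (hk : k + 2 < N) (hj : j + 2 < N) (hkj : k < j) :
    compVec N e k hk ⟨j + 2, hj⟩ = 0 := by
  simp only [compVec]
  rw [if_neg (by omega), if_neg (by omega), if_neg (by omega)]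

theorem compVec_apply_add_two_self {j : ℕ} (hj : j + 2 < N) :
    compVec N e j hj ⟨j + 2, hj⟩ = e ⟨j + 1, by omega⟩ - e ⟨j, by omega⟩ := by
  simp [compVec]

def compMatrix : Matrix (Fin (N - 2)) (Fin N) ℝ :=
  of fun j => compVec N e j (by omega)

theorem compMatrix_mul_diagonal_inv_mul_transpose_apply (p : Fin N → ℝ) (j k : Fin (N - 2)) :
    (compMatrix e * diagonal p⁻¹ * (compMatrix e)ᵀ) j k =
      ∑ m, compVec N e j (by omega) m * compVec N e k (by omega) m / p m := by
  simp only [mul_apply, diagonal_apply, transpose_apply, compMatrix, of_apply, mul_ite, mul_zero,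
    Finset.sum_ite_eq', Finset.mem_univ, if_true, Pi.inv_apply, div_eq_mul_inv]
  exact Finset.sum_congr rfl fun m _ => by ring

theorem compMatrix_vecMul_injective (he : Function.Injective e) :
    Function.Injective (compMatrix e).vecMul := by
  refine vecMul_injective_of_isLowerTriangular_submatrix (c := fun j => ⟨j + 2, by omega⟩)
    (fun k j hjk => compVec_apply_add_two_of_lt e _ _ hjk) fun j => ?_
  rw [compMatrix, of_apply, compVec_apply_add_two_self]
  exact sub_ne_zero.mpr (he.ne (by simp))

end compVec

/-- For pairwise distinct reduced energy levels and positive probabilities, the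
`(N−2)×(N−2)` matrix `g_{jk} = Σₘ f_{jm} f_{km} / pₘ` is positive definite;
equivalently the Hessian of the constrained entropy, with entries `−g_{jk}`, is
negative definite, so the critical point of the entropy is a maximum. -/
theorem gram_matrix_posDef_hessian_negDef (N : ℕ) (e : Fin N → ℝ)
    (hdist : Function.Injective e)
    (p : Fin N → ℝ) (hp : ∀ m, 0 < p m)
    (g : Matrix (Fin (N - 2)) (Fin (N - 2)) ℝ)
    (hg : ∀ j k : Fin (N - 2), g j k =
      ∑ m, compVec N e j (by have := j.2; omega) m *
        compVec N e k (by have := k.2; omega) m / p m) :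
    g.PosDef ∧
    ∀ v : Fin (N - 2) → ℝ, v ≠ 0 → ∑ j, ∑ k, v j * (-g j k) * v k < 0 := by
  have hg_eq : g = compMatrix e * diagonal p⁻¹ * (compMatrix e)ᵀ :=
    ext fun j k => (hg j k).trans (compMatrix_mul_diagonal_inv_mul_transpose_apply e p j k).symm
  have hpos : g.PosDef :=
    hg_eq ▸ posDef_mul_diagonal_inv_mul_transpose (compMatrix_vecMul_injective e hdist) hp
  exact ⟨hpos, fun v hv => hpos.sum_sum_mul_neg_mul_lt_zero hv⟩
end

section
/- Let N ≥ 3 and let e : Fin N → ℝ have pairwise distinct values. Suppose q ∈ ℝ^N is orthogonal to fⱼ for every j = 1, …, N−2, where fⱼ is the vector whose only nonzero entries are at positions j, j+1, j+2 and equal e_{j+2} − e_{j+1}, e_j − e_{j+2}, e_{j+1} − e_j respectively. Then q lies in the span of the all-ones vector I = (1,…,1) and the energy vector e: there exist α, β ∈ ℝ with qₖ = α + β eₖ for all k. -/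
lemma sum_compVec_mul (N : ℕ) (e : Fin N → ℝ) (j : ℕ) (hj : j + 2 < N) (q : Fin N → ℝ) :
    ∑ m, compVec N e j hj m * q m =
      (e ⟨j + 2, hj⟩ - e ⟨j + 1, by omega⟩) * q ⟨j, by omega⟩ +
      (e ⟨j, by omega⟩ - e ⟨j + 2, hj⟩) * q ⟨j + 1, by omega⟩ +
      (e ⟨j + 1, by omega⟩ - e ⟨j, by omega⟩) * q ⟨j + 2, hj⟩ := by
  set j0 : Fin N := ⟨j, by omega⟩
  set j1 : Fin N := ⟨j + 1, by omega⟩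
  set j2 : Fin N := ⟨j + 2, hj⟩
  have hsub : ∑ m, compVec N e j hj m * q m
      = ∑ m ∈ ({j0, j1, j2} : Finset (Fin N)), compVec N e j hj m * q m := by
    refine (Finset.sum_subset (Finset.subset_univ _) ?_).symm
    intro x _ hx
    simp only [Finset.mem_insert, Finset.mem_singleton] at hx
    push_neg at hx
    obtain ⟨h0, h1, h2⟩ := hx
    have h0' : (x : ℕ) ≠ j := fun h => h0 (Fin.ext h)
    have h1' : (x : ℕ) ≠ j + 1 := fun h => h1 (Fin.ext h)
    have h2' : (x : ℕ) ≠ j + 2 := fun h => h2 (Fin.ext h)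
    simp [compVec, h0', h1', h2']
  have h01 : j0 ≠ j1 := by simp [j0, j1, Fin.ext_iff]
  have h02 : j0 ≠ j2 := by simp [j0, j2, Fin.ext_iff]
  have h12 : j1 ≠ j2 := by simp [j1, j2, Fin.ext_iff]
  rw [hsub, Finset.sum_insert (by simp [h01, h02]), Finset.sum_insert (by simp [h12]),
    Finset.sum_singleton]
  simp [compVec, j0, j1, j2]
  ring

/-- For pairwise distinct reduced energy levels, any vector `q ∈ ℝᴺ` orthogonal to
every complementary vector `fⱼ` lies in the span of the all-ones vector `I` and the
energy vector `e`: `qₖ = α + β eₖ` for some `α, β`. -/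
theorem orthogonal_to_compVec_mem_span (N : ℕ) (hN : 3 ≤ N) (e : Fin N → ℝ)
    (hdist : Function.Injective e)
    (q : Fin N → ℝ)
    (horth : ∀ (j : ℕ) (hj : j + 2 < N), ∑ m, compVec N e j hj m * q m = 0) :
    ∃ α β : ℝ, ∀ k, q k = α + β * e k := by
  have h0 : (0 : ℕ) < N := by omega
  have h1 : (1 : ℕ) < N := by omega
  set β : ℝ := (q ⟨1, h1⟩ - q ⟨0, h0⟩) / (e ⟨1, h1⟩ - e ⟨0, h0⟩) with hβ
  set α : ℝ := q ⟨0, h0⟩ - β * e ⟨0, h0⟩ with hα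
  have hne01 : e ⟨1, h1⟩ - e ⟨0, h0⟩ ≠ 0 := by
    intro h
    have : (⟨1, h1⟩ : Fin N) = ⟨0, h0⟩ := hdist (by linarith)
    simp [Fin.ext_iff] at this
  have key : ∀ n : ℕ, ∀ hn : n < N, q ⟨n, hn⟩ = α + β * e ⟨n, hn⟩ := by
    intro n
    induction n using Nat.strong_induction_on with
    | _ n ih =>
      intro hn
      match n with
      | 0 => simp [hα]
      | 1 =>
        rw [hα, hβ]
        field_simp
        ring
      | (m + 2) =>
        have hj : m + 2 < N := hn
        have E := horth m hj
        rw [sum_compVec_mul] at E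
        have hA := ih m (by omega) (by omega)
        have hB := ih (m + 1) (by omega) (by omega)
        have hneAB : e ⟨m + 1, by omega⟩ - e ⟨m, by omega⟩ ≠ 0 := by
          intro h
          have : (⟨m + 1, by omega⟩ : Fin N) = ⟨m, by omega⟩ := hdist (by linarith)
          simp [Fin.ext_iff] at this
        rw [hA, hB] at E
        have : (e ⟨m + 1, by omega⟩ - e ⟨m, by omega⟩) * q ⟨m + 2, hj⟩
            = (e ⟨m + 1, by omega⟩ - e ⟨m, by omega⟩) * (α + β * e ⟨m + 2, hj⟩) := by
          linarith [E]
        exact mul_left_cancel₀ hneAB this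
  exact ⟨α, β, fun k => by have := key k.1 k.2; simpa using this⟩
end
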